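/- arXiv:1802.05531 — 3 statements merged into one kernel-verified Lean document; each statement's English description precedes it below -/
import Mathlib

section
/- Let M, N ∈ M_n(ℝ) with ρ(MN) ≤ 1 and suppose NM is normal. If A ∈ M_n(ℝ) is Schur stable and normaloid, then MAN is Schur stable. -/
set_option synthInstance.maxHeartbeats 1000000
set_option maxHeartbeats 1000000

open Polynomial Matrix NNReal

noncomputable def eigs {n : ℕ} (A : Matrix (Fin n) (Fin n) ℝ) : Multiset ℂ :=
  (A.charpoly.map (algebraMap ℝ ℂ)).roots

def SchurStable {n : ℕ} (A : Matrix (Fin n) (Fin n) ℝ) : Prop :=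
  ∀ z ∈ eigs A, ‖z‖ < 1

noncomputable def specRad {n : ℕ} (A : Matrix (Fin n) (Fin n) ℝ) : ℝ≥0 :=
  ((eigs A).map fun z => ‖z‖₊).sup

noncomputable def specRadL {n : ℕ}
    (L : Matrix (Fin n) (Fin n) ℝ →ₗ[ℝ] Matrix (Fin n) (Fin n) ℝ) : ℝ≥0 :=
  ((L.charpoly.map (algebraMap ℝ ℂ)).roots.map fun z => ‖z‖₊).sup

noncomputable def opNorm {n : ℕ} (A : Matrix (Fin n) (Fin n) ℝ) : ℝ :=
  ‖Matrix.toEuclideanCLM (𝕜 := ℝ) A‖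

/-! ### Auxiliary lemmas -/

lemma aux_det_smul_one_sub_mul {n : ℕ} {K : Type*} [Field K] {t : K} (ht : t ≠ 0)
    (P Q : Matrix (Fin n) (Fin n) K) :
    (t • (1 : Matrix (Fin n) (Fin n) K) - P * Q).det
      = (t • (1 : Matrix (Fin n) (Fin n) K) - Q * P).det := by
  have h : ∀ R S : Matrix (Fin n) (Fin n) K,
      t • (1 : Matrix (Fin n) (Fin n) K) - R * S = t • (1 - (t⁻¹ • R) * S) := by
    intro R S
    rw [smul_sub, Matrix.smul_mul, smul_smul, mul_inv_cancel₀ ht, one_smul]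
  rw [h P Q, h Q P, Matrix.det_smul, Matrix.det_smul, Matrix.det_one_sub_mul_comm,
    Matrix.mul_smul, ← Matrix.smul_mul]

lemma aux_charmatrix_map {n : ℕ} {K : Type*} [Field K] {L : Type*} [Field L]
    (f : K[X] →+* L) (Y : Matrix (Fin n) (Fin n) K) :
    (charmatrix Y).map f = f X • (1 : Matrix (Fin n) (Fin n) L) - Y.map (f.comp C) := by
  ext i j
  by_cases h : i = j
  · subst h
    simp [charmatrix_apply_eq, Matrix.one_apply]
  · simp [charmatrix_apply_ne _ _ _ h, Matrix.one_apply, h]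

lemma aux_charpoly_comm {n : ℕ} (P Q : Matrix (Fin n) (Fin n) ℝ) :
    (P * Q).charpoly = (Q * P).charpoly := by
  apply RatFunc.algebraMap_injective ℝ
  set f : ℝ[X] →+* RatFunc ℝ := algebraMap ℝ[X] (RatFunc ℝ)
  have ht : f X ≠ 0 := by
    simpa using fun h =>
      Polynomial.X_ne_zero ((map_eq_zero_iff f (RatFunc.algebraMap_injective ℝ)).mp h)
  have key : ∀ R S : Matrix (Fin n) (Fin n) ℝ,
      f ((R * S).charpoly) = (f X • (1 : Matrix (Fin n) (Fin n) (RatFunc ℝ))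
        - (R.map (f.comp C)) * (S.map (f.comp C))).det := by
    intro R S
    rw [Matrix.charpoly, RingHom.map_det, RingHom.mapMatrix_apply, aux_charmatrix_map,
      Matrix.map_mul]
  rw [key P Q, key Q P, aux_det_smul_one_sub_mul ht]

lemma aux_eval_charpoly {n : ℕ} (Y : Matrix (Fin n) (Fin n) ℂ) (z : ℂ) :
    Y.charpoly.eval z = (z • (1 : Matrix (Fin n) (Fin n) ℂ) - Y).det := by
  have : Y.charpoly.eval z = (evalRingHom z) Y.charpoly := rfl
  rw [this, Matrix.charpoly, RingHom.map_det, RingHom.mapMatrix_apply]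
  congr 1
  ext i j
  by_cases h : i = j
  · subst h; simp [charmatrix_apply_eq, Matrix.one_apply]
  · simp [charmatrix_apply_ne _ _ _ h, Matrix.one_apply, h]

lemma aux_mem_spectrum_iff_root {n : ℕ} (Y : Matrix (Fin n) (Fin n) ℂ) (z : ℂ) :
    z ∈ spectrum ℂ Y ↔ Y.charpoly.IsRoot z := by
  rw [spectrum.mem_iff, IsRoot, aux_eval_charpoly]
  rw [show (algebraMap ℂ (Matrix (Fin n) (Fin n) ℂ)) z = z • 1 by
    rw [Algebra.algebraMap_eq_smul_one]]
  rw [← not_iff_not, not_not, Matrix.isUnit_iff_isUnit_det, isUnit_iff_ne_zero]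

lemma aux_mem_eigs_iff {n : ℕ} (X : Matrix (Fin n) (Fin n) ℝ) (z : ℂ) :
    z ∈ eigs X ↔ z ∈ spectrum ℂ (X.map (algebraMap ℝ ℂ)) := by
  rw [eigs, aux_mem_spectrum_iff_root, Matrix.charpoly_map, Polynomial.mem_roots']
  simp only [and_iff_right_iff_imp]
  intro _
  exact ((X.charpoly_monic).map _).ne_zero

lemma aux_mem_spectrum_clm {n : ℕ} (X : Matrix (Fin n) (Fin n) ℝ) (z : ℂ) (hz : z ∈ eigs X) :
    z ∈ spectrum ℂ (Matrix.toEuclideanCLM (𝕜 := ℂ) (X.map (algebraMap ℝ ℂ))) := by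
  rw [AlgEquiv.spectrum_eq (Matrix.toEuclideanCLM (𝕜 := ℂ) (n := Fin n))]
  exact (aux_mem_eigs_iff X z).mp hz

lemma aux_sup_lt {s : Multiset ℝ≥0} (h : ∀ b ∈ s, b < 1) : s.sup < 1 := by
  induction s using Multiset.induction with
  | empty => simpa using zero_lt_one
  | cons a s ih =>
    rw [Multiset.sup_cons, sup_lt_iff]
    exact ⟨h a (Multiset.mem_cons_self a s), ih fun b hb => h b (Multiset.mem_cons_of_mem hb)⟩

lemma aux_specRad_lt_one {n : ℕ} {A : Matrix (Fin n) (Fin n) ℝ} (hA : SchurStable A) :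
    specRad A < 1 := by
  refine aux_sup_lt fun b hb => ?_
  obtain ⟨z, hz, rfl⟩ := Multiset.mem_map.mp hb
  have := hA z hz
  rw [← NNReal.coe_lt_coe]
  simpa using this

lemma aux_euclidean_norm_sq {n : ℕ} {𝕜 : Type*} [RCLike 𝕜] (w : EuclideanSpace 𝕜 (Fin n)) :
    ‖w‖ ^ 2 = ∑ i, ‖w i‖ ^ 2 := by
  rw [EuclideanSpace.norm_eq, Real.sq_sqrt] ; positivity

lemma aux_clm_norm_map_le {n : ℕ} (X : Matrix (Fin n) (Fin n) ℝ) :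
    ‖Matrix.toEuclideanCLM (𝕜 := ℂ) (X.map (algebraMap ℝ ℂ))‖
      ≤ ‖Matrix.toEuclideanCLM (𝕜 := ℝ) X‖ := by
  set C := ‖Matrix.toEuclideanCLM (𝕜 := ℝ) X‖ with hCdef
  have hC : 0 ≤ C := norm_nonneg _
  refine ContinuousLinearMap.opNorm_le_bound _ hC fun v => ?_
  set x : EuclideanSpace ℝ (Fin n) := WithLp.toLp 2 (fun i => (v i).re : Fin n → ℝ) with hx
  set y : EuclideanSpace ℝ (Fin n) := WithLp.toLp 2 (fun i => (v i).im : Fin n → ℝ) with hy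
  have hre : ∀ i, ((Matrix.toEuclideanCLM (𝕜 := ℂ) (X.map (algebraMap ℝ ℂ)) v) i).re
      = (Matrix.toEuclideanCLM (𝕜 := ℝ) X x) i := by
    intro i
    show ((X.map (algebraMap ℝ ℂ)).mulVec (WithLp.ofLp v) i).re = X.mulVec (WithLp.ofLp x) i
    simp [Matrix.mulVec, dotProduct, Complex.re_sum, Complex.mul_re, hx]
  have him : ∀ i, ((Matrix.toEuclideanCLM (𝕜 := ℂ) (X.map (algebraMap ℝ ℂ)) v) i).im
      = (Matrix.toEuclideanCLM (𝕜 := ℝ) X y) i := by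
    intro i
    show ((X.map (algebraMap ℝ ℂ)).mulVec (WithLp.ofLp v) i).im = X.mulVec (WithLp.ofLp y) i
    simp [Matrix.mulVec, dotProduct, Complex.im_sum, Complex.mul_im, hy]
  have hz : ∀ z : ℂ, ‖z‖ ^ 2 = z.re ^ 2 + z.im ^ 2 := fun z => by
    rw [Complex.sq_norm, Complex.normSq_apply]; ring
  have hsplit : ‖Matrix.toEuclideanCLM (𝕜 := ℂ) (X.map (algebraMap ℝ ℂ)) v‖ ^ 2
      = ‖Matrix.toEuclideanCLM (𝕜 := ℝ) X x‖ ^ 2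
        + ‖Matrix.toEuclideanCLM (𝕜 := ℝ) X y‖ ^ 2 := by
    rw [aux_euclidean_norm_sq, aux_euclidean_norm_sq, aux_euclidean_norm_sq,
      ← Finset.sum_add_distrib]
    refine Finset.sum_congr rfl fun i _ => ?_
    rw [hz, hre i, him i]
    simp [Real.norm_eq_abs, sq_abs]
  have hvsplit : ‖v‖ ^ 2 = ‖x‖ ^ 2 + ‖y‖ ^ 2 := by
    rw [aux_euclidean_norm_sq, aux_euclidean_norm_sq, aux_euclidean_norm_sq,
      ← Finset.sum_add_distrib]
    refine Finset.sum_congr rfl fun i _ => ?_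
    rw [hz]
    simp [Real.norm_eq_abs, sq_abs, hx, hy]
  have hxb : ‖Matrix.toEuclideanCLM (𝕜 := ℝ) X x‖ ≤ C * ‖x‖ :=
    (Matrix.toEuclideanCLM (𝕜 := ℝ) X).le_opNorm x
  have hyb : ‖Matrix.toEuclideanCLM (𝕜 := ℝ) X y‖ ≤ C * ‖y‖ :=
    (Matrix.toEuclideanCLM (𝕜 := ℝ) X).le_opNorm y
  have hsq : ‖Matrix.toEuclideanCLM (𝕜 := ℂ) (X.map (algebraMap ℝ ℂ)) v‖ ^ 2
      ≤ (C * ‖v‖) ^ 2 := by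
    rw [hsplit]
    have h1 := pow_le_pow_left₀ (norm_nonneg _) hxb 2
    have h2 := pow_le_pow_left₀ (norm_nonneg _) hyb 2
    calc ‖Matrix.toEuclideanCLM (𝕜 := ℝ) X x‖ ^ 2 + ‖Matrix.toEuclideanCLM (𝕜 := ℝ) X y‖ ^ 2
        ≤ (C * ‖x‖) ^ 2 + (C * ‖y‖) ^ 2 := add_le_add h1 h2
      _ = (C * ‖v‖) ^ 2 := by rw [mul_pow, mul_pow, mul_pow, ← mul_add, ← hvsplit]
  exact (pow_le_pow_iff_left₀ (norm_nonneg _) (mul_nonneg hC (norm_nonneg _)) two_ne_zero).mp hsq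

lemma aux_conjTranspose_map {n : ℕ} (X : Matrix (Fin n) (Fin n) ℝ) :
    (X.map (algebraMap ℝ ℂ))ᴴ = Xᵀ.map (algebraMap ℝ ℂ) := by
  ext i j
  simp [Matrix.conjTranspose_apply, Complex.conj_ofReal]

lemma aux_normal_norm_le {n : ℕ} (Y : Matrix (Fin n) (Fin n) ℝ)
    (hnormal : Y * Yᵀ = Yᵀ * Y) :
    ‖Matrix.toEuclideanCLM (𝕜 := ℂ) (Y.map (algebraMap ℝ ℂ))‖₊ ≤ specRad Y := by
  set T := Matrix.toEuclideanCLM (𝕜 := ℂ) (Y.map (algebraMap ℝ ℂ)) with hT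
  have h1 : IsStarNormal (Y.map (algebraMap ℝ ℂ)) := by
    constructor
    rw [Commute, SemiconjBy]
    show (Y.map _)ᴴ * _ = _ * (Y.map _)ᴴ
    rw [aux_conjTranspose_map, ← Matrix.map_mul, ← Matrix.map_mul, hnormal]
  haveI h2 : IsStarNormal T := by
    constructor
    rw [Commute, SemiconjBy, hT, ← map_star, ← _root_.map_mul, ← _root_.map_mul,
      h1.star_comm_self.eq]
  have h3 : spectralRadius ℂ T = ‖T‖₊ := IsStarNormal.spectralRadius_eq_nnnorm T
  have h4 : spectralRadius ℂ T ≤ (specRad Y : ENNReal) := by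
    unfold spectralRadius
    refine iSup₂_le fun k hk => ?_
    have hk' : k ∈ eigs Y := by
      rw [aux_mem_eigs_iff]
      rwa [hT, AlgEquiv.spectrum_eq (Matrix.toEuclideanCLM (𝕜 := ℂ) (n := Fin n))] at hk
    have : ‖k‖₊ ≤ specRad Y :=
      Multiset.le_sup (Multiset.mem_map.mpr ⟨k, hk', rfl⟩)
    exact_mod_cast this
  rw [h3] at h4
  exact_mod_cast h4

theorem stmt5 {n : ℕ} (M N A : Matrix (Fin n) (Fin n) ℝ)
    (hρ : specRad (M * N) ≤ 1)
    (hnormal : (N * M) * (N * M)ᵀ = (N * M)ᵀ * (N * M))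
    (hA : SchurStable A) (hnormaloid : (specRad A : ℝ) = opNorm A) :
    SchurStable (M * A * N) := by
  intro z hz
  -- move to `A * (N * M)`
  have heq : eigs (M * A * N) = eigs (A * (N * M)) := by
    unfold eigs
    rw [show M * A * N = M * (A * N) by rw [Matrix.mul_assoc], aux_charpoly_comm,
      Matrix.mul_assoc]
  rw [heq] at hz
  have hspec := aux_mem_spectrum_clm _ z hz
  have h1 : ‖z‖ ≤ ‖Matrix.toEuclideanCLM (𝕜 := ℂ) ((A * (N * M)).map (algebraMap ℝ ℂ))‖ := by
    rcases Nat.eq_zero_or_pos n with hn | hn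
    · subst hn
      exfalso
      have : eigs (A * (N * M)) = 0 := by
        unfold eigs
        rw [show (A * (N * M)).charpoly = 1 by
          rw [Matrix.charpoly, Matrix.det_isEmpty]]
        simp
      rw [this] at hz
      exact absurd hz (Multiset.notMem_zero z)
    · haveI : Nonempty (Fin n) := ⟨⟨0, hn⟩⟩
      exact spectrum.norm_le_norm_of_mem hspec
  -- split the norm
  have hmul : Matrix.toEuclideanCLM (𝕜 := ℂ) ((A * (N * M)).map (algebraMap ℝ ℂ))
      = Matrix.toEuclideanCLM (𝕜 := ℂ) (A.map (algebraMap ℝ ℂ))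
        * Matrix.toEuclideanCLM (𝕜 := ℂ) ((N * M).map (algebraMap ℝ ℂ)) := by
    rw [Matrix.map_mul, _root_.map_mul]
  have hAle : ‖Matrix.toEuclideanCLM (𝕜 := ℂ) (A.map (algebraMap ℝ ℂ))‖ ≤ (specRad A : ℝ) := by
    rw [hnormaloid]
    exact aux_clm_norm_map_le A
  have hNMle : ‖Matrix.toEuclideanCLM (𝕜 := ℂ) ((N * M).map (algebraMap ℝ ℂ))‖ ≤ 1 := by
    have h5 : specRad (N * M) = specRad (M * N) := by
      unfold specRad eigs
      rw [aux_charpoly_comm]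
    have h6 := aux_normal_norm_le (N * M) hnormal
    rw [h5] at h6
    have h7 : ‖Matrix.toEuclideanCLM (𝕜 := ℂ) ((N * M).map (algebraMap ℝ ℂ))‖₊ ≤ 1 :=
      le_trans h6 hρ
    exact_mod_cast h7
  have hlt : (specRad A : ℝ) < 1 := by
    exact_mod_cast aux_specRad_lt_one hA
  calc ‖z‖ ≤ ‖Matrix.toEuclideanCLM (𝕜 := ℂ) ((A * (N * M)).map (algebraMap ℝ ℂ))‖ := h1
    _ ≤ ‖Matrix.toEuclideanCLM (𝕜 := ℂ) (A.map (algebraMap ℝ ℂ))‖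
        * ‖Matrix.toEuclideanCLM (𝕜 := ℂ) ((N * M).map (algebraMap ℝ ℂ))‖ := by
        rw [hmul]; exact norm_mul_le _ _
    _ ≤ (specRad A : ℝ) * 1 :=
        mul_le_mul hAle hNMle (norm_nonneg _) (NNReal.coe_nonneg _)
    _ = (specRad A : ℝ) := mul_one _
    _ < 1 := hlt
end

section
/- Every linear map L on M_n(ℝ) that maps Schur stable matrices to Schur stable matrices satisfies ρ(L(A)) ≤ ρ(A) for all A ∈ M_n(ℝ). -/
open Polynomial Matrix NNReal

lemma eval_charpoly' {n : ℕ} (M : Matrix (Fin n) (Fin n) ℂ) (z : ℂ) :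
    M.charpoly.eval z = (z • (1 : Matrix (Fin n) (Fin n) ℂ) - M).det := by
  rw [Matrix.charpoly, _root_.eval_det, matPolyEquiv_charmatrix]
  simp [smul_eq_diagonal_mul]

lemma mem_eigs_iff {n : ℕ} (A : Matrix (Fin n) (Fin n) ℝ) (z : ℂ) :
    z ∈ eigs A ↔ (z • (1 : Matrix (Fin n) (Fin n) ℂ) - A.map (algebraMap ℝ ℂ)).det = 0 := by
  rw [eigs, ← Matrix.charpoly_map, mem_roots', ← eval_charpoly']
  have h0 : (A.map (algebraMap ℝ ℂ)).charpoly ≠ 0 := (Matrix.charpoly_monic _).ne_zero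
  exact ⟨fun h => h.2, fun h => ⟨h0, h⟩⟩

lemma map_smul'' {n : ℕ} (r : ℝ) (A : Matrix (Fin n) (Fin n) ℝ) :
    (r • A).map (algebraMap ℝ ℂ) = (r : ℂ) • A.map (algebraMap ℝ ℂ) := by
  ext i j
  simp [Matrix.map_apply]

lemma eigs_smul_iff {n : ℕ} {r : ℝ} (hr : r ≠ 0) (A : Matrix (Fin n) (Fin n) ℝ) (z : ℂ) :
    z ∈ eigs A ↔ (r : ℂ) * z ∈ eigs (r • A) := by
  rw [mem_eigs_iff, mem_eigs_iff, map_smul'']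
  have key : ((r : ℂ) * z) • (1 : Matrix (Fin n) (Fin n) ℂ) - (r : ℂ) • A.map (algebraMap ℝ ℂ)
      = (r : ℂ) • (z • (1 : Matrix (Fin n) (Fin n) ℂ) - A.map (algebraMap ℝ ℂ)) := by
    rw [smul_sub, smul_smul]
  rw [key, Matrix.det_smul]
  have hrc : ((r : ℂ)) ^ Fintype.card (Fin n) ≠ 0 :=
    pow_ne_zero _ (by exact_mod_cast hr)
  constructor
  · intro h; rw [h, mul_zero]
  · intro h; exact (mul_eq_zero.mp h).resolve_left hrc

lemma nnnorm_le_specRad {n : ℕ} {A : Matrix (Fin n) (Fin n) ℝ} {z : ℂ} (hz : z ∈ eigs A) :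
    ‖z‖₊ ≤ specRad A :=
  Multiset.le_sup (Multiset.mem_map_of_mem _ hz)

theorem stmt8 {n : ℕ}
    (L : Matrix (Fin n) (Fin n) ℝ →ₗ[ℝ] Matrix (Fin n) (Fin n) ℝ)
    (hL : ∀ A, SchurStable A → SchurStable (L A)) :
    ∀ A, specRad (L A) ≤ specRad A := by
  intro A
  by_contra h
  push_neg at h
  obtain ⟨c, hc1, hc2⟩ := exists_between h
  have hcpos : (0 : ℝ) < (c : ℝ) := by
    exact_mod_cast lt_of_le_of_lt zero_le hc1
  set r : ℝ := ((c : ℝ))⁻¹ with hrdef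
  have hrpos : 0 < r := inv_pos.mpr hcpos
  have hr : r ≠ 0 := hrpos.ne'
  have hmul : (r : ℂ) * ((c : ℝ) : ℂ) = 1 := by
    rw [hrdef]; push_cast; exact inv_mul_cancel₀ (by exact_mod_cast hcpos.ne')
  have hstab : SchurStable (r • A) := by
    intro z hz
    have hw : ((c : ℝ) : ℂ) * z ∈ eigs A := by
      rw [eigs_smul_iff hr A, ← mul_assoc, hmul, one_mul]
      exact hz
    have h1 : ‖((c : ℝ) : ℂ) * z‖ ≤ (specRad A : ℝ) := by
      exact_mod_cast nnnorm_le_specRad hw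
    have h2 : (specRad A : ℝ) < (c : ℝ) := by exact_mod_cast hc1
    rw [norm_mul, Complex.norm_real, Real.norm_eq_abs, abs_of_pos hcpos] at h1
    nlinarith [norm_nonneg z]
  have hLs := hL _ hstab
  rw [_root_.map_smul] at hLs
  have hle : specRad (L A) ≤ c := by
    rw [specRad]
    refine Multiset.sup_le.mpr ?_
    intro x hx
    obtain ⟨z, hz, rfl⟩ := Multiset.mem_map.mp hx
    have hz2 : (r : ℂ) * z ∈ eigs (r • L A) := (eigs_smul_iff hr (L A) z).mp hz
    have h1 : ‖(r : ℂ) * z‖ < 1 := hLs _ hz2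
    rw [norm_mul, Complex.norm_real, Real.norm_eq_abs, abs_of_pos hrpos] at h1
    have : ‖z‖ ≤ (c : ℝ) := by
      rw [hrdef] at h1
      nlinarith [mul_lt_mul_of_pos_left h1 hcpos, mul_inv_cancel₀ hcpos.ne']
    exact_mod_cast this
  exact absurd (lt_of_lt_of_le hc2 hle) (lt_irrefl _)
end

section
/- Let A ∈ M_n(ℝ) be invertible and suppose the map L(X) = A X Aᵗ on M_n(ℝ) maps the set of Schur stable matrices onto itself. Then every eigenvalue of A has absolute value 1. -/
open Polynomial Matrix NNReal

open scoped ComplexOrder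

namespace Stmt12Aux

variable {n : ℕ}

lemma my_eval_charpoly {R : Type*} [CommRing R] (M : Matrix (Fin n) (Fin n) R) (r : R) :
    M.charpoly.eval r = (r • (1 : Matrix (Fin n) (Fin n) R) - M).det := by
  rw [Matrix.charpoly, eval_det, Matrix.matPolyEquiv_charmatrix]
  simp [smul_one_eq_diagonal]

/-- Complexification of a real matrix. -/
noncomputable def cm (M : Matrix (Fin n) (Fin n) ℝ) : Matrix (Fin n) (Fin n) ℂ :=
  M.map (algebraMap ℝ ℂ)

lemma cm_eq (M : Matrix (Fin n) (Fin n) ℝ) : cm M = (algebraMap ℝ ℂ).mapMatrix M := rfl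

lemma cm_mul (M N : Matrix (Fin n) (Fin n) ℝ) : cm (M * N) = cm M * cm N :=
  Matrix.map_mul

lemma cm_one : cm (1 : Matrix (Fin n) (Fin n) ℝ) = 1 := by simp [cm_eq]

lemma cm_transpose (M : Matrix (Fin n) (Fin n) ℝ) : cm Mᵀ = (cm M)ᵀ := by
  ext i j; simp [cm]

lemma cm_conjTranspose (M : Matrix (Fin n) (Fin n) ℝ) : (cm M)ᴴ = cm Mᵀ := by
  ext i j; simp [cm, Matrix.conjTranspose_apply, Matrix.map_apply, Complex.conj_ofReal]

lemma cm_smul (t : ℝ) (M : Matrix (Fin n) (Fin n) ℝ) : cm (t • M) = (t : ℂ) • cm M := by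
  ext i j; simp [cm, Matrix.map_apply, Complex.ofReal_mul]

lemma cm_isUnit {M : Matrix (Fin n) (Fin n) ℝ} (h : IsUnit M) : IsUnit (cm M) := by
  rw [cm_eq]; exact h.map _

lemma mem_eigs (B : Matrix (Fin n) (Fin n) ℝ) (z : ℂ) :
    z ∈ eigs B ↔ (z • (1 : Matrix (Fin n) (Fin n) ℂ) - cm B).det = 0 := by
  rw [eigs, ← Matrix.charpoly_map,
    Polynomial.mem_roots ((Matrix.charpoly_monic _).ne_zero)]
  simp only [IsRoot.def, my_eval_charpoly]
  rfl

lemma eigs_smul_one {t : ℝ} {z : ℂ} (hz : z ∈ eigs (t • (1 : Matrix (Fin n) (Fin n) ℝ))) :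
    z = (t : ℂ) := by
  rw [mem_eigs, cm_smul, cm_one, ← sub_smul, Matrix.det_smul, det_one, mul_one] at hz
  have : z - (t : ℂ) = 0 := by
    rcases Nat.eq_zero_or_pos n with h | h
    · simp [h, Fintype.card_fin] at hz
    · exact pow_eq_zero_iff (by simpa using h.ne') |>.mp (by simpa using hz)
  exact sub_eq_zero.mp this

lemma schurStable_smul_one {t : ℝ} (ht : |t| < 1) :
    SchurStable (t • (1 : Matrix (Fin n) (Fin n) ℝ)) := by
  intro z hz
  rw [eigs_smul_one hz]
  simpa using ht

lemma eigs_transpose_mul_self {A : Matrix (Fin n) (Fin n) ℝ} (hA : IsUnit A) {z : ℂ}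
    (hz : z ∈ eigs (Aᵀ * A)) : z ∈ eigs (A * Aᵀ) := by
  rw [mem_eigs, cm_mul, cm_transpose] at hz ⊢
  set A' := cm A
  have hdet : A'.det ≠ 0 := ((Matrix.isUnit_iff_isUnit_det A').mp (cm_isUnit hA)).ne_zero
  have key : (z • (1 : Matrix (Fin n) (Fin n) ℂ) - A' * A'ᵀ) * A'
      = A' * (z • (1 : Matrix (Fin n) (Fin n) ℂ) - A'ᵀ * A') := by
    rw [sub_mul, mul_sub, Matrix.smul_mul, Matrix.mul_smul, one_mul, mul_one, mul_assoc]
  have hd := congrArg Matrix.det key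
  rw [Matrix.det_mul, Matrix.det_mul] at hd
  have h2 : (z • (1 : Matrix (Fin n) (Fin n) ℂ) - A' * A'ᵀ).det * A'.det
      = (z • (1 : Matrix (Fin n) (Fin n) ℂ) - A'ᵀ * A').det * A'.det := by
    rw [hd]; ring
  rw [mul_right_cancel₀ hdet h2, hz]

lemma smul_mem_eigs {t : ℝ} {M : Matrix (Fin n) (Fin n) ℝ} {z : ℂ}
    (hz : z ∈ eigs M) : (t : ℂ) * z ∈ eigs (t • M) := by
  rw [mem_eigs] at hz ⊢
  rw [cm_smul]
  have h : ((t : ℂ) * z) • (1 : Matrix (Fin n) (Fin n) ℂ) - (t : ℂ) • cm M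
      = (t : ℂ) • (z • (1 : Matrix (Fin n) (Fin n) ℂ) - cm M) := by
    rw [smul_sub, smul_smul]
  rw [h, Matrix.det_smul, hz, mul_zero]

lemma real_conjTranspose (M : Matrix (Fin n) (Fin n) ℝ) : Mᴴ = Mᵀ := by
  ext i j; simp [Matrix.conjTranspose_apply]

lemma cm_sub_smul (r : ℝ) (M : Matrix (Fin n) (Fin n) ℝ) :
    (r • (1 : Matrix (Fin n) (Fin n) ℝ) - M).map (algebraMap ℝ ℂ)
      = (r : ℂ) • (1 : Matrix (Fin n) (Fin n) ℂ) - cm M := by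
  ext i j
  simp [cm, Matrix.map_apply, Matrix.sub_apply, Matrix.smul_apply, Matrix.one_apply, apply_ite,
    smul_eq_mul]

lemma S_eq_one (A : Matrix (Fin n) (Fin n) ℝ)
    (hall : ∀ z ∈ eigs (Aᵀ * A), ‖z‖ = 1) : Aᵀ * A = 1 := by
  have hPSD : (Aᵀ * A).PosSemidef := by
    rw [← real_conjTranspose]; exact Matrix.posSemidef_conjTranspose_mul_self A
  have hH : (Aᵀ * A).IsHermitian := hPSD.1
  have heig : ∀ i, hH.eigenvalues i = 1 := by
    intro i
    set lam := hH.eigenvalues i with hlam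
    set v : Fin n → ℝ := ⇑(hH.eigenvectorBasis i) with hv
    have hmv : (Aᵀ * A) *ᵥ v = lam • v := hH.mulVec_eigenvectorBasis i
    have hv0 : v ≠ 0 := by
      intro h
      apply (hH.eigenvectorBasis).toBasis.ne_zero i
      rw [OrthonormalBasis.coe_toBasis]
      apply (WithLp.equiv 2 (Fin n → ℝ)).injective
      simpa [hv] using h
    have hdet : (lam • (1 : Matrix (Fin n) (Fin n) ℝ) - Aᵀ * A).det = 0 := by
      rw [← Matrix.exists_mulVec_eq_zero_iff]
      refine ⟨v, hv0, ?_⟩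
      rw [Matrix.sub_mulVec, Matrix.smul_mulVec, Matrix.one_mulVec, hmv, sub_self]
    have hmem : (lam : ℂ) ∈ eigs (Aᵀ * A) := by
      rw [mem_eigs, ← cm_sub_smul]
      have hd : ((lam • (1 : Matrix (Fin n) (Fin n) ℝ) - Aᵀ * A).map (algebraMap ℝ ℂ)).det
          = algebraMap ℝ ℂ ((lam • (1 : Matrix (Fin n) (Fin n) ℝ) - Aᵀ * A).det) :=
        (RingHom.map_det _ _).symm
      rw [hd, hdet, map_zero]
    have h1 : |lam| = 1 := by simpa using hall _ hmem
    have h0 : 0 ≤ lam := hPSD.eigenvalues_nonneg i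
    rw [abs_of_nonneg h0] at h1
    exact h1
  have hspec := hH.spectral_theorem
  have hdiag : (RCLike.ofReal (K := ℝ) ∘ hH.eigenvalues) = fun _ => (1 : ℝ) := by
    funext i; simp [heig i]
  rw [hdiag] at hspec
  rw [hspec]
  simp only [Matrix.diagonal_one, mul_one]
  exact map_one _

end Stmt12Aux

open Stmt12Aux in
theorem stmt12 {n : ℕ} (A : Matrix (Fin n) (Fin n) ℝ) (hA : IsUnit A)
    (honto : (fun X : Matrix (Fin n) (Fin n) ℝ => A * X * Aᵀ) '' {X | SchurStable X}
      = {X | SchurStable X}) :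
    ∀ z ∈ eigs A, ‖z‖ = 1 := by
  classical
  have hAT : IsUnit Aᵀ := by
    rw [Matrix.isUnit_iff_isUnit_det, Matrix.det_transpose, ← Matrix.isUnit_iff_isUnit_det]
    exact hA
  have hdAT : IsUnit (cm Aᵀ).det := (Matrix.isUnit_iff_isUnit_det _).mp (cm_isUnit hAT)
  have hdS : IsUnit (cm (Aᵀ * A)).det :=
    (Matrix.isUnit_iff_isUnit_det _).mp (cm_isUnit (hAT.mul hA))
  have h1 : ∀ X : Matrix (Fin n) (Fin n) ℝ, SchurStable X → SchurStable (A * X * Aᵀ) := by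
    intro X hX
    have hmem : A * X * Aᵀ
        ∈ (fun X : Matrix (Fin n) (Fin n) ℝ => A * X * Aᵀ) '' {X | SchurStable X} :=
      ⟨X, hX, rfl⟩
    rw [honto] at hmem
    exact hmem
  have h2 : ∀ Y : Matrix (Fin n) (Fin n) ℝ, SchurStable Y →
      ∃ X, SchurStable X ∧ A * X * Aᵀ = Y := by
    intro Y hY
    have hmem : Y ∈ (fun X : Matrix (Fin n) (Fin n) ℝ => A * X * Aᵀ) '' {X | SchurStable X} := by
      rw [honto]; exact hY
    obtain ⟨X, hX, hXY⟩ := hmem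
    exact ⟨X, hX, hXY⟩
  -- every eigenvalue of Aᵀ * A has modulus 1
  have key : ∀ w ∈ eigs (Aᵀ * A), ‖w‖ = 1 := by
    intro w hw
    have hw0 : w ≠ 0 := by
      intro h
      rw [h, mem_eigs, zero_smul, zero_sub, Matrix.det_neg] at hw
      have := hdS.ne_zero
      rcases mul_eq_zero.mp hw with h' | h'
      · exact (pow_ne_zero _ (by norm_num : (-1 : ℂ) ≠ 0)) h'
      · exact this h'
    by_cases hlt : ‖w‖ < 1
    · -- too small: contradiction via surjectivity
      exfalso
      set t := ‖w‖ with htdef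
      have ht0 : 0 < t := norm_pos_iff.mpr hw0
      obtain ⟨X, hX, hXY⟩ := h2 (t • (1 : Matrix (Fin n) (Fin n) ℝ))
        (schurStable_smul_one (by rwa [abs_of_pos ht0]))
      have hC : cm A * cm X * cm Aᵀ = (t : ℂ) • 1 := by
        rw [← cm_mul, ← cm_mul, hXY, cm_smul, cm_one]
      have hac : cm A * cm X = ((t : ℂ) • 1) * (cm Aᵀ)⁻¹ := by
        have h := congrArg (fun M => M * (cm Aᵀ)⁻¹) hC
        simpa [mul_assoc, Matrix.mul_nonsing_inv _ hdAT] using h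
      have hSX : cm (Aᵀ * A) * cm X = (t : ℂ) • 1 := by
        rw [cm_mul, cm_transpose, mul_assoc, ← cm_transpose, hac, Matrix.smul_mul, one_mul,
          Matrix.mul_smul, Matrix.mul_nonsing_inv _ hdAT]
      set w' := (t : ℂ) / w with hw'def
      have hmul : cm (Aᵀ * A) * (w' • 1 - cm X)
          = w' • cm (Aᵀ * A) - (t : ℂ) • (1 : Matrix (Fin n) (Fin n) ℂ) := by
        rw [mul_sub, Matrix.mul_smul, mul_one, hSX]
      have hfac : w' • cm (Aᵀ * A) - (t : ℂ) • (1 : Matrix (Fin n) (Fin n) ℂ)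
          = w' • (cm (Aᵀ * A) - w • (1 : Matrix (Fin n) (Fin n) ℂ)) := by
        rw [smul_sub, smul_smul, div_mul_cancel₀ _ hw0]
      have hz2 : (cm (Aᵀ * A) - w • (1 : Matrix (Fin n) (Fin n) ℂ)).det = 0 := by
        have hneg : cm (Aᵀ * A) - w • (1 : Matrix (Fin n) (Fin n) ℂ)
            = -(w • (1 : Matrix (Fin n) (Fin n) ℂ) - cm (Aᵀ * A)) := (neg_sub _ _).symm
        rw [hneg, Matrix.det_neg, (mem_eigs _ _).mp hw, mul_zero]
      have hd : (cm (Aᵀ * A)).det * (w' • 1 - cm X).det = 0 := by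
        rw [← Matrix.det_mul, hmul, hfac, Matrix.det_smul, hz2, mul_zero]
      have hdet0 : ((w' : ℂ) • 1 - cm X).det = 0 := by
        rcases mul_eq_zero.mp hd with h' | h'
        · exact absurd h' hdS.ne_zero
        · exact h'
      have hlt' := hX w' ((mem_eigs X w').mpr hdet0)
      rw [hw'def, norm_div, Complex.norm_real, Real.norm_eq_abs, abs_of_pos ht0, ← htdef, div_self ht0.ne'] at hlt'
      exact lt_irrefl _ hlt'
    · -- not less than 1: show it cannot exceed 1 either
      by_cases hgt : 1 < ‖w‖
      · exfalso
        set t := ‖w‖⁻¹ with htdef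
        have hnorm0 : (0 : ℝ) < ‖w‖ := by linarith
        have ht0 : 0 < t := by positivity
        have ht1 : t < 1 := by
          rw [htdef]
          exact inv_lt_one_of_one_lt₀ hgt
        have hst := h1 _ (schurStable_smul_one (t := t) (by rwa [abs_of_pos ht0]))
        have heq : A * (t • (1 : Matrix (Fin n) (Fin n) ℝ)) * Aᵀ = t • (A * Aᵀ) := by
          rw [Matrix.mul_smul, mul_one, Matrix.smul_mul]
        rw [heq] at hst
        have hmem : (t : ℂ) * w ∈ eigs (t • (A * Aᵀ)) :=
          smul_mem_eigs (eigs_transpose_mul_self hA hw)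
        have hlt' := hst _ hmem
        rw [norm_mul, Complex.norm_real, Real.norm_eq_abs, abs_of_pos ht0, htdef,
          inv_mul_cancel₀ hnorm0.ne'] at hlt'
        exact lt_irrefl _ hlt'
      · linarith [not_lt.mp hlt, not_lt.mp hgt]
  have hS1 : Aᵀ * A = 1 := S_eq_one A key
  -- conclude: A is orthogonal, hence its complex eigenvalues are unimodular
  intro z hz
  rw [mem_eigs] at hz
  obtain ⟨v, hv0, hveq⟩ := (Matrix.exists_mulVec_eq_zero_iff).mpr hz
  have hAv : cm A *ᵥ v = z • v := by
    rw [Matrix.sub_mulVec, Matrix.smul_mulVec, Matrix.one_mulVec, sub_eq_zero] at hveq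
    exact hveq.symm
  have hATA : (cm A)ᴴ * cm A = 1 := by
    rw [cm_conjTranspose, ← cm_mul, hS1, cm_one]
  have hcomp : star (cm A *ᵥ v) ⬝ᵥ (cm A *ᵥ v) = star v ⬝ᵥ v := by
    rw [Matrix.star_mulVec, ← Matrix.dotProduct_mulVec, Matrix.mulVec_mulVec, hATA,
      Matrix.one_mulVec]
  rw [hAv] at hcomp
  have hls : star (z • v) ⬝ᵥ (z • v) = (starRingEnd ℂ z * z) * (star v ⬝ᵥ v) := by
    rw [star_smul, smul_dotProduct, dotProduct_smul, smul_eq_mul, smul_eq_mul]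
    simp only [Complex.star_def]
    ring
  rw [hls] at hcomp
  have hc0 : star v ⬝ᵥ v ≠ 0 := fun h => hv0 (dotProduct_star_self_eq_zero.mp h)
  have hz1 : starRingEnd ℂ z * z = 1 :=
    mul_right_cancel₀ hc0 (by rw [hcomp, one_mul])
  have hns : (Complex.normSq z : ℂ) = 1 := by
    rw [← Complex.mul_conj]
    rw [mul_comm] at hz1
    exact hz1
  have hns' : Complex.normSq z = 1 := by exact_mod_cast hns
  have habs : ‖z‖ ^ 2 = 1 := by
    rw [← Complex.sq_norm] at hns'
    simpa using hns'
  nlinarith [norm_nonneg z]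
end
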